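/- Let μ be a finite Borel measure on S^{n-1} with μ(S^{n-1}) > 0, whose first order moments vanish and whose second moment matrix M(μ) has exactly one positive eigenvalue α and n−1 zero eigenvalues, with unit eigenvector u for the eigenvalue α. Then μ = (α/2)(δ_u + δ_{-u}), hence μ is the surface area measure of any convex body of surface area α/2 contained in a hyperplane orthogonal to u. -/

import Mathlib

open MeasureTheory Metric Real Filter
open scoped InnerProductSpace ENNReal NNReal Topology

noncomputable section

abbrev En (n : ℕ) := EuclideanSpace ℝ (Fin n)

abbrev Sph (n : ℕ) : Set (En n) := Metric.sphere 0 1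

/-- `μ` is the surface area measure `S_{n-1}(K, ·)` of the convex body `K`. -/
def IsSurfaceAreaMeasure {n : ℕ} (K : Set (En n)) (μ : Measure (Sph n)) : Prop :=
  ((interior K).Nonempty ∧ ∀ ω : Set (Sph n), MeasurableSet ω →
      μ ω = μH[((n : ℝ) - 1)]
        {x ∈ frontier K | ∃ u ∈ ω, ∀ y ∈ K, ⟪y - x, (u : En n)⟫_ℝ ≤ 0})
  ∨ (interior K = ∅ ∧ ∃ u u' : Sph n, (u' : En n) = -(u : En n) ∧
      (∃ c : ℝ, ∀ x ∈ K, ⟪x, (u : En n)⟫_ℝ = c) ∧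
      μ = (μH[((n : ℝ) - 1)] K) • (Measure.dirac u + Measure.dirac u'))

/-- The matrix of second order moments of a measure on the sphere. -/
def secondMomentMatrix {n : ℕ} (μ : Measure (Sph n)) : Matrix (Fin n) (Fin n) ℝ :=
  Matrix.of fun i j => ∫ u, (u : En n) i * (u : En n) j ∂μ


open Matrix

/-!
The kernel of `M(μ)` contains `u^⊥`, and `z ⬝ M(μ) z = ∫ ⟪w, z⟫² dμ`, so `μ`-almost every `w`
is orthogonal to `u^⊥`: `μ` is concentrated on `{u, -u}`, i.e. `μ = a δ_u + b δ_{-u}`.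
The vanishing first moment forces `a = b`, and `u ⬝ M(μ) u = α` forces `a + b = α`.
-/

section TwoAtoms

variable {X : Type*} [MeasurableSpace X] [MeasurableSingletonClass X]

lemma eq_smul_dirac_add_smul_dirac_of_ae_eq_or_eq {μ : Measure X} {x y : X} (hxy : x ≠ y)
    (h : ∀ᵐ w ∂μ, w = x ∨ w = y) : μ = μ {x} • Measure.dirac x + μ {y} • Measure.dirac y := by
  calc μ = μ.restrict ({x} ∪ {y}) := (Measure.restrict_eq_self_of_ae_mem h).symm
    _ = μ {x} • Measure.dirac x + μ {y} • Measure.dirac y := by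
      rw [Measure.restrict_union (Set.disjoint_singleton.2 hxy) (measurableSet_singleton y),
        Measure.restrict_singleton, Measure.restrict_singleton]

lemma integral_smul_dirac_add_smul_dirac {a b : ℝ≥0∞} (ha : a ≠ ∞) (hb : b ≠ ∞) (x y : X)
    (f : X → ℝ) :
    ∫ w, f w ∂(a • Measure.dirac x + b • Measure.dirac y) = a.toReal * f x + b.toReal * f y := by
  rw [integral_add_measure ((integrable_dirac enorm_lt_top).smul_measure ha)
      ((integrable_dirac enorm_lt_top).smul_measure hb),
    integral_smul_measure, integral_smul_measure, integral_dirac, integral_dirac, smul_eq_mul,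
    smul_eq_mul]

end TwoAtoms

lemma interior_eq_empty_of_inner_eq_const {E : Type*} [NormedAddCommGroup E]
    [InnerProductSpace ℝ E] {K : Set E} {u : E} (hu : u ≠ 0) {c : ℝ}
    (hK : ∀ x ∈ K, ⟪x, u⟫_ℝ = c) : interior K = ∅ := by
  refine Set.eq_empty_iff_forall_notMem.2 fun x hx => ?_
  have hline : ∀ᶠ t : ℝ in 𝓝 0, x + t • u ∈ K := by
    have : Tendsto (fun t : ℝ => x + t • u) (𝓝 0) (𝓝 x) :=
      Continuous.tendsto' (by fun_prop) 0 x (by simp)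
    exact this.eventually (mem_interior_iff_mem_nhds.1 hx)
  obtain ⟨t, htK, ht⟩ := ((hline.filter_mono nhdsWithin_le_nhds).and
    (self_mem_nhdsWithin : {t : ℝ | t ≠ 0} ∈ 𝓝[≠] 0)).exists
  have hxK : x ∈ K := by simpa using hline.self_of_nhds
  have := hK _ htK
  rw [inner_add_left, real_inner_smul_left, hK x hxK, add_eq_left] at this
  exact mul_ne_zero ht (inner_self_ne_zero.2 hu) this

section Sphere

variable {n : ℕ}

lemma continuous_coord_sph (i : Fin n) : Continuous fun w : Sph n => (w : En n) i :=
  (EuclideanSpace.proj i).continuous.comp continuous_subtype_val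

lemma inner_sq_eq_sum_sum (w z : En n) :
    ⟪w, z⟫_ℝ ^ 2 = ∑ i, ∑ j, z i * (w i * w j * z j) := by
  simp only [PiLp.inner_apply, RCLike.inner_apply, conj_trivial, sq, Finset.sum_mul_sum]
  exact Finset.sum_congr rfl fun i _ => Finset.sum_congr rfl fun j _ => by ring

lemma integral_inner_sq_eq_dotProduct_mulVec (μ : Measure (Sph n)) [IsFiniteMeasure μ]
    (z : En n) :
    ∫ w, ⟪(w : En n), z⟫_ℝ ^ 2 ∂μ = z.ofLp ⬝ᵥ (secondMomentMatrix μ *ᵥ z.ofLp) := by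
  have hint : ∀ i j, Integrable (fun w : Sph n => (w : En n) i * (w : En n) j * z j) μ :=
    fun i j => (((continuous_coord_sph i).mul (continuous_coord_sph j)).mul
      continuous_const).integrable_of_hasCompactSupport (HasCompactSupport.of_compactSpace _)
  simp_rw [inner_sq_eq_sum_sum]
  rw [integral_finsetSum _ fun i _ => integrable_finsetSum _ fun j _ => (hint i j).const_mul _]
  simp_rw [integral_finsetSum _ fun j _ => (hint _ j).const_mul _, integral_const_mul,
    integral_mul_const, dotProduct, mulVec, dotProduct, Finset.mul_sum]
  rfl

lemma ae_inner_eq_zero_of_mulVec_eq_zero (μ : Measure (Sph n)) [IsFiniteMeasure μ] {z : En n}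
    (hz : secondMomentMatrix μ *ᵥ z.ofLp = 0) : ∀ᵐ w : Sph n ∂μ, ⟪(w : En n), z⟫_ℝ = 0 := by
  have hint : Integrable (fun w : Sph n => ⟪(w : En n), z⟫_ℝ ^ 2) μ :=
    ((continuous_subtype_val.inner continuous_const).pow 2).integrable_of_hasCompactSupport
      (HasCompactSupport.of_compactSpace _)
  have h0 : ∫ w, ⟪(w : En n), z⟫_ℝ ^ 2 ∂μ = 0 := by
    rw [integral_inner_sq_eq_dotProduct_mulVec, hz, dotProduct_zero]
  filter_upwards [(integral_eq_zero_iff_of_nonneg (fun w => sq_nonneg _) hint).1 h0] with w hw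
  exact pow_eq_zero_iff two_ne_zero |>.1 hw

lemma norm_coe_sph (w : Sph n) : ‖(w : En n)‖ = 1 := mem_sphere_zero_iff_norm.1 w.2

lemma dotProduct_self_coe_sph (w : Sph n) : (w : En n).ofLp ⬝ᵥ (w : En n).ofLp = 1 := by
  have h := real_inner_self_eq_norm_sq (w : En n)
  rwa [norm_coe_sph, one_pow, EuclideanSpace.inner_eq_star_dotProduct, star_trivial] at h

lemma eq_inner_smul_of_forall_inner_single_sub_eq_zero {w u : En n}
    (h : ∀ k, ⟪w, EuclideanSpace.single k (1 : ℝ) - u k • u⟫_ℝ = 0) : w = ⟪w, u⟫_ℝ • u := by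
  ext k
  have hk := h k
  rw [inner_sub_right, real_inner_smul_right, EuclideanSpace.inner_single_right, conj_trivial,
    one_mul, sub_eq_zero] at hk
  rw [PiLp.smul_apply, smul_eq_mul, hk, mul_comm]

lemma eq_or_eq_neg_of_eq_smul {w u : Sph n} {t : ℝ} (h : (w : En n) = t • (u : En n)) :
    w = u ∨ (w : En n) = -(u : En n) := by
  have ht : |t| = 1 := by
    have := congrArg norm h
    rwa [norm_smul, norm_coe_sph, norm_coe_sph, mul_one, Real.norm_eq_abs, eq_comm] at this
  rcases abs_eq zero_le_one |>.1 ht with rfl | rfl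
  · exact Or.inl (Subtype.ext (by simpa using h))
  · exact Or.inr (by simpa using h)

lemma ae_eq_or_eq_neg_of_mulVec_eq_zero (μ : Measure (Sph n)) [IsFiniteMeasure μ] (u : Sph n)
    (hker : ∀ z : En n, ⟪z, (u : En n)⟫_ℝ = 0 → secondMomentMatrix μ *ᵥ z.ofLp = 0) :
    ∀ᵐ w ∂μ, w = u ∨ (w : En n) = -(u : En n) := by
  have horth (k : Fin n) :
      ⟪EuclideanSpace.single k (1 : ℝ) - (u : En n) k • (u : En n), (u : En n)⟫_ℝ = 0 := by
    rw [inner_sub_left, real_inner_smul_left, EuclideanSpace.inner_single_left,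
      real_inner_self_eq_norm_sq, norm_coe_sph]
    simp
  filter_upwards [ae_all_iff.2 fun k => ae_inner_eq_zero_of_mulVec_eq_zero μ (hker _ (horth k))]
    with w hw
  exact eq_or_eq_neg_of_eq_smul (eq_inner_smul_of_forall_inner_single_sub_eq_zero hw)

end Sphere

theorem stmt7 {n : ℕ} (μ : Measure (Sph n)) [IsFiniteMeasure μ]
    (hmom1 : ∀ i, ∫ w, (w : En n) i ∂μ = 0)
    (α : ℝ) (u u' : Sph n) (hu' : (u' : En n) = -(u : En n))
    (heig : Matrix.mulVec (secondMomentMatrix μ) (fun i => (u : En n) i)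
      = α • fun i => (u : En n) i)
    (hker : ∀ z : En n, ⟪z, (u : En n)⟫_ℝ = 0 →
      Matrix.mulVec (secondMomentMatrix μ) (fun i => z i) = 0) :
    μ = ENNReal.ofReal (α / 2) • (Measure.dirac u + Measure.dirac u') ∧
    ∀ K : Set (En n), Convex ℝ K → IsCompact K → K.Nonempty →
      (∃ c : ℝ, ∀ x ∈ K, ⟪x, (u : En n)⟫_ℝ = c) →
      μH[((n : ℝ) - 1)] K = ENNReal.ofReal (α / 2) →
      IsSurfaceAreaMeasure K μ := by
  have hu0 : (u : En n) ≠ 0 := ne_zero_of_mem_unit_sphere u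
  have hne : u ≠ u' := fun h => hu0 <| by
    have h2 : (2 : ℝ) • (u : En n) = 0 := by rw [two_smul, ← eq_neg_iff_add_eq_zero, ← hu', h]
    exact (smul_eq_zero.1 h2).resolve_left two_ne_zero
  have hsupp : ∀ᵐ w ∂μ, w = u ∨ w = u' := (ae_eq_or_eq_neg_of_mulVec_eq_zero μ u hker).mono
    fun w hw => hw.imp_right fun h => Subtype.ext (h.trans hu'.symm)
  have hdecomp := eq_smul_dirac_add_smul_dirac_of_ae_eq_or_eq hne hsupp
  set a := μ {u}
  set b := μ {u'}
  have hint (f : Sph n → ℝ) : ∫ w, f w ∂μ = a.toReal * f u + b.toReal * f u' := by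
    rw [hdecomp]
    exact integral_smul_dirac_add_smul_dirac (measure_ne_top μ _) (measure_ne_top μ _) u u' f
  have hab : a.toReal = b.toReal := by
    have : (a.toReal - b.toReal) • (u : En n) = 0 := by
      ext i
      have hi := hmom1 i
      rw [hint, hu'] at hi
      simp only [PiLp.smul_apply, PiLp.zero_apply, PiLp.neg_apply, smul_eq_mul] at hi ⊢
      linarith
    exact sub_eq_zero.1 ((smul_eq_zero.1 this).resolve_right hu0)
  have hsum : a.toReal + b.toReal = α := by
    have := integral_inner_sq_eq_dotProduct_mulVec μ u
    rw [hint, heig, dotProduct_smul, dotProduct_self_coe_sph, hu', inner_neg_left,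
      real_inner_self_eq_norm_sq, norm_coe_sph] at this
    simpa using this
  have hμ : μ = ENNReal.ofReal (α / 2) • (Measure.dirac u + Measure.dirac u') := by
    rw [hdecomp, smul_add, ← ENNReal.ofReal_toReal (a := a) (measure_ne_top μ _),
      ← ENNReal.ofReal_toReal (a := b) (measure_ne_top μ _)]
    congr 3 <;> linarith
  refine ⟨hμ, fun K _ _ _ hK hKarea => Or.inr ⟨?_, u, u', hu', hK, by rw [hKarea]; exact hμ⟩⟩
  obtain ⟨c, hc⟩ := hK
  exact interior_eq_empty_of_inner_eq_const hu0 hc
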